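/- Let p : Z → W be a continuous surjective map between topological spaces with all fibers finite of the same cardinality k, such that Z is path-connected and every path in W admits a lift to Z starting at any prescribed point of the fiber. Suppose v : Z → ℝ is a function such that for every path γ in Z, the change v(γ(1)) − v(γ(0)) depends only on the path p∘γ in W. Then v is constant on each fiber of p. -/

import Mathlib

/-!
Lifting `p ∘ γ`, for a path `γ` from `z₁` to `z₂`, from each point of the fiber `S` over
`p z₁ = p z₂` gives a self-map `F` of `S` with `v ∘ F = v + d`, where `d = v z₂ - v z₁`.
Then `v (F^[n] z) = v z + n • d`, and since `S` is finite two iterates coincide, so `d = 0`.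
-/

open unitInterval

theorem Finite.eq_zero_of_apply_map_eq_add {α G : Type*} [Finite α] [AddCommGroup G]
    [IsAddTorsionFree G] (F : α → α) (f : α → G) {d : G} (h : ∀ a, f (F a) = f a + d)
    (a : α) : d = 0 := by
  have orbit : ∀ n : ℕ, f (F^[n] a) = f a + n • d := by
    intro n
    induction n with
    | zero => simp
    | succ n ih => rw [Function.iterate_succ_apply', h, ih, succ_nsmul, add_assoc]
  obtain ⟨m, n, hmn, heq⟩ := Finite.exists_ne_map_eq_of_infinite (fun n : ℕ => F^[n] a)
  have hsmul : ((m : ℤ) - n) • d = 0 := by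
    have hval := congrArg f heq
    simp only [orbit, add_right_inj] at hval
    simp [sub_zsmul, hval]
  by_contra hd
  have hcoeff := (IsAddTorsionFree.zsmul_eq_zero_iff_left hd).mp hsmul
  exact hmn (by exact_mod_cast sub_eq_zero.mp hcoeff)

theorem exists_mem_fiber_apply_eq_add_of_path {Z W G : Type*} [TopologicalSpace Z]
    [TopologicalSpace W] [AddCommGroup G] {p : Z → W} (hp : Continuous p)
    (hlift : ∀ (γ : C(I, W)) (z : Z), p z = γ 0 →
      ∃ γ' : C(I, Z), γ' 0 = z ∧ ∀ t, p (γ' t) = γ t)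
    {v : Z → G} (hv : ∀ γ₁ γ₂ : C(I, Z), (∀ t, p (γ₁ t) = p (γ₂ t)) →
      v (γ₁ 1) - v (γ₁ 0) = v (γ₂ 1) - v (γ₂ 0))
    {z₁ z₂ z : Z} (γ : Path z₁ z₂) (hz : p z = p z₁) :
    ∃ z', p z' = p z₂ ∧ v z' = v z + (v z₂ - v z₁) := by
  obtain ⟨γ', hγ'0, hγ'⟩ := hlift (γ.map hp) z (by simpa using hz)
  refine ⟨γ' 1, by simpa using hγ' 1, ?_⟩
  have hdiff := hv γ' γ (by simpa using hγ')
  simp only [hγ'0, ContinuousMap.coe_coe, Path.source, Path.target] at hdiff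
  rw [← hdiff, add_sub_cancel]

theorem stmt5_general {Z W : Type*} [TopologicalSpace Z] [TopologicalSpace W] [PathConnectedSpace Z]
    (p : Z → W) (hp : Continuous p)
    (k : ℕ) (hk : 0 < k) (hfib : ∀ w : W, (p ⁻¹' {w}).ncard = k)
    (hlift : ∀ (γ : C(unitInterval, W)) (z : Z), p z = γ 0 →
      ∃ γ' : C(unitInterval, Z), γ' 0 = z ∧ ∀ t, p (γ' t) = γ t)
    (v : Z → ℝ)
    (hv : ∀ γ₁ γ₂ : C(unitInterval, Z), (∀ t, p (γ₁ t) = p (γ₂ t)) →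
      v (γ₁ 1) - v (γ₁ 0) = v (γ₂ 1) - v (γ₂ 0)) :
    ∀ z₁ z₂ : Z, p z₁ = p z₂ → v z₁ = v z₂ := by
  intro z₁ z₂ hpz
  set S := p ⁻¹' {p z₂}
  have : Finite S := (Set.finite_of_ncard_pos (hfib (p z₂) ▸ hk)).to_subtype
  have transport : ∀ z : S, ∃ z' : S, v z' = v z + (v z₂ - v z₁) := by
    rintro ⟨z, hz⟩
    obtain ⟨z', hz', hvz'⟩ := exists_mem_fiber_apply_eq_add_of_path hp hlift hv
      (PathConnectedSpace.somePath z₁ z₂) (hz.trans hpz.symm)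
    exact ⟨⟨z', hz'⟩, hvz'⟩
  choose F hF using transport
  have hd := Finite.eq_zero_of_apply_map_eq_add F (v ∘ (↑)) hF ⟨z₂, rfl⟩
  exact (sub_eq_zero.mp hd).symm

/-- Let `p : Z → W` be a continuous surjective map between topological spaces with
all fibers finite of the same cardinality `k`, such that `Z` is path-connected and every path in
`W` admits a lift to `Z` starting at any prescribed point of the fiber. Suppose `v : Z → ℝ` is a
function such that for every path `γ` in `Z`, the change `v(γ(1)) − v(γ(0))` depends only on the
path `p ∘ γ` in `W`. Then `v` is constant on each fiber of `p`. -/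
theorem stmt5 {Z W : Type*} [TopologicalSpace Z] [TopologicalSpace W] [PathConnectedSpace Z]
    (p : Z → W) (hp : Continuous p) (hsurj : Function.Surjective p)
    (k : ℕ) (hk : 0 < k) (hfib : ∀ w : W, (p ⁻¹' {w}).ncard = k)
    (hlift : ∀ (γ : C(unitInterval, W)) (z : Z), p z = γ 0 →
      ∃ γ' : C(unitInterval, Z), γ' 0 = z ∧ ∀ t, p (γ' t) = γ t)
    (v : Z → ℝ)
    (hv : ∀ γ₁ γ₂ : C(unitInterval, Z), (∀ t, p (γ₁ t) = p (γ₂ t)) →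
      v (γ₁ 1) - v (γ₁ 0) = v (γ₂ 1) - v (γ₂ 0)) :
    ∀ z₁ z₂ : Z, p z₁ = p z₂ → v z₁ = v z₂ :=
  stmt5_general p hp k hk hfib hlift v hv
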